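/- Let ρ₀ > 0, let n ≥ 2 and m be integers with 0 < m < n and gcd(m,n) = 1, and let ρ₁ : ℝ → ℝ be continuous and 2π-periodic. For θ ∈ ℝ set θ_j = θ + 2πmj/n and define M(θ) as the derivative at ε = 0 of ε ↦ ∑_{j=0}^{n-1} √( (ρ₀+ερ₁(θ_j))² + (ρ₀+ερ₁(θ_{j+1}))² − 2(ρ₀+ερ₁(θ_j))(ρ₀+ερ₁(θ_{j+1}))·cos(2πm/n) ). If there exists k ∈ ℤ with k ≠ 0, n ∣ k, and the k-th Fourier coefficient of ρ₁ nonzero, then M is not constant on ℝ. -/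

import Mathlib

open Real

/-- The `k`-th Fourier coefficient (with respect to period `2π`) of a function
`g : ℝ → ℂ`, namely `(1/2π) ∫_0^{2π} g(θ) e^{-ikθ} dθ`. -/
noncomputable def fourierCoeff2pi (g : ℝ → ℂ) (k : ℤ) : ℂ :=
  (1 / (2 * (Real.pi : ℂ))) *
    ∫ θ in (0 : ℝ)..(2 * Real.pi), g θ * Complex.exp (-Complex.I * (k : ℂ) * (θ : ℂ))

/-! At `ε = 0` every chord of the polygon has the same length, and the derivative of the chord
between radii `ρ₀ + ε a` and `ρ₀ + ε b` is `√((1 - cos α) / 2) (a + b)`. Since the polygon closes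
up, summing gives `M θ = 2 √((1 - cos α) / 2) ∑ⱼ ρ₁ (θ + 2πmj/n)` with a positive factor, so `M`
is constant iff the rotation-orbit sum of `ρ₁` is. Rotating by `s` multiplies the `k`-th Fourier
coefficient by `e^{iks}`, which is `1` on the orbit when `n ∣ k`; hence the `k`-th coefficient of
the orbit sum is `n` times that of `ρ₁`, which is nonzero, while a constant has no nonzero
frequencies. -/

open Finset

lemma hasDerivAt_chord_length (ρ₀ c a b : ℝ) (hρ : 0 < ρ₀) (hc : c < 1) :
    HasDerivAt (fun ε : ℝ => √((ρ₀ + ε * a) ^ 2 + (ρ₀ + ε * b) ^ 2 -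
        2 * (ρ₀ + ε * a) * (ρ₀ + ε * b) * c))
      (√((1 - c) / 2) * (a + b)) 0 := by
  have hr : ∀ d : ℝ, HasDerivAt (fun ε : ℝ => ρ₀ + ε * d) d 0 := fun d => by
    simpa using ((hasDerivAt_id (0 : ℝ)).mul_const d).const_add ρ₀
  have hq : HasDerivAt (fun ε : ℝ => (ρ₀ + ε * a) ^ 2 + (ρ₀ + ε * b) ^ 2 -
      2 * (ρ₀ + ε * a) * (ρ₀ + ε * b) * c) (2 * ρ₀ * (1 - c) * (a + b)) 0 := by
    refine ((((hr a).pow 2).add ((hr b).pow 2)).sub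
      ((((hr a).const_mul 2).mul (hr b)).mul_const c)).congr_deriv ?_
    simp only [zero_mul, add_zero, Nat.cast_ofNat, Nat.add_one_sub_one, pow_one]
    ring
  have hpos : 0 < (1 - c) / 2 := by linarith
  have hq0 : (ρ₀ + 0 * a) ^ 2 + (ρ₀ + 0 * b) ^ 2 - 2 * (ρ₀ + 0 * a) * (ρ₀ + 0 * b) * c
      = (2 * ρ₀) ^ 2 * ((1 - c) / 2) := by ring
  refine (hq.sqrt ?_).congr_deriv ?_
  · rw [hq0]; positivity
  · rw [hq0, Real.sqrt_mul (by positivity), Real.sqrt_sq (by positivity),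
      div_eq_iff (by positivity)]
    linear_combination (-(4 * ρ₀ * (a + b))) * Real.sq_sqrt hpos.le

lemma hasDerivAt_closed_polygon_length (ρ₀ c : ℝ) (hρ : 0 < ρ₀) (hc : c < 1) (r : ℕ → ℝ) (n : ℕ)
    (hr : r n = r 0) :
    HasDerivAt (fun ε : ℝ => ∑ j ∈ range n, √((ρ₀ + ε * r j) ^ 2 + (ρ₀ + ε * r (j + 1)) ^ 2 -
        2 * (ρ₀ + ε * r j) * (ρ₀ + ε * r (j + 1)) * c))
      (2 * √((1 - c) / 2) * ∑ j ∈ range n, r j) 0 := by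
  refine (HasDerivAt.fun_sum fun j _ =>
    hasDerivAt_chord_length ρ₀ c (r j) (r (j + 1)) hρ hc).congr_deriv ?_
  have hcyc : ∑ j ∈ range n, r (j + 1) = ∑ j ∈ range n, r j := by
    rw [← sub_eq_zero, ← sum_sub_distrib, sum_range_sub, hr, sub_self]
  rw [← mul_sum, sum_add_distrib, hcyc]
  ring

lemma fourierCoeff2pi_comp_add {g : ℝ → ℂ} (hg : Function.Periodic g (2 * π)) (s : ℝ) (k : ℤ) :
    fourierCoeff2pi (fun θ => g (θ + s)) k =
      Complex.exp (Complex.I * k * s) * fourierCoeff2pi g k := by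
  set F : ℝ → ℂ := fun θ => g θ * Complex.exp (-Complex.I * k * θ)
  have hF : Function.Periodic F (2 * π) := fun θ => by
    simp only [F, hg θ, Complex.ofReal_add, Complex.ofReal_mul, Complex.ofReal_ofNat]
    rw [show -Complex.I * k * (θ + 2 * π) = -Complex.I * k * θ + (-k : ℤ) * (2 * π * Complex.I) by
      push_cast; ring, Complex.exp_add, Complex.exp_int_mul_two_pi_mul_I, mul_one]
  have hshift : ∀ θ : ℝ, g (θ + s) * Complex.exp (-Complex.I * k * θ) =
      Complex.exp (Complex.I * k * s) * F (θ + s) := fun θ => by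
    simp only [F, Complex.ofReal_add]
    rw [mul_left_comm, ← Complex.exp_add]
    ring_nf
  unfold fourierCoeff2pi
  simp only [hshift, intervalIntegral.integral_const_mul,
    intervalIntegral.integral_comp_add_right F s, zero_add]
  rw [add_comm, hF.intervalIntegral_add_eq s 0, zero_add]
  ring

lemma fourierCoeff2pi_const {k : ℤ} (hk : k ≠ 0) (a : ℂ) : fourierCoeff2pi (fun _ => a) k = 0 := by
  have hk' : -Complex.I * k ≠ 0 := by simp [hk]
  have hper : Complex.exp (-Complex.I * k * (2 * π : ℝ)) = 1 := by
    rw [show -Complex.I * k * (2 * π : ℝ) = (-k : ℤ) * (2 * π * Complex.I) by push_cast; ring]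
    exact Complex.exp_int_mul_two_pi_mul_I _
  unfold fourierCoeff2pi
  rw [intervalIntegral.integral_const_mul, integral_exp_mul_complex hk', hper]
  simp

lemma fourierCoeff2pi_sum {ι : Type*} (s : Finset ι) {g : ι → ℝ → ℂ}
    (hg : ∀ i ∈ s, IntervalIntegrable (g i) MeasureTheory.volume 0 (2 * π)) (k : ℤ) :
    fourierCoeff2pi (fun θ => ∑ i ∈ s, g i θ) k = ∑ i ∈ s, fourierCoeff2pi (g i) k := by
  unfold fourierCoeff2pi
  simp only [sum_mul]
  rw [intervalIntegral.integral_finsetSum fun i hi =>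
    (hg i hi).mul_continuousOn (by fun_prop), mul_sum]

lemma fourierCoeff2pi_sum_rotations {g : ℝ → ℂ} (hg : Continuous g)
    (hper : Function.Periodic g (2 * π)) (m : ℤ) {n : ℕ} {k : ℤ} (hk : (n : ℤ) ∣ k) :
    fourierCoeff2pi (fun θ => ∑ j ∈ range n, g (θ + 2 * π * m * j / n)) k =
      n * fourierCoeff2pi g k := by
  rw [fourierCoeff2pi_sum (g := fun (j : ℕ) θ => g (θ + 2 * π * m * j / n)) _
    fun j _ => (hg.comp (continuous_add_const _)).intervalIntegrable _ _]
  obtain ⟨t, rfl⟩ := hk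
  have hrot : ∀ j ∈ range n,
      Complex.exp (Complex.I * (n * t : ℤ) * (2 * π * m * j / n : ℝ)) = 1 := fun j hj => by
    have hn : (n : ℂ) ≠ 0 := Nat.cast_ne_zero.mpr (Nat.ne_zero_of_lt (mem_range.mp hj))
    rw [show Complex.I * (n * t : ℤ) * (2 * π * m * j / n : ℝ) =
        (t * m * j : ℤ) * (2 * π * Complex.I) by push_cast; field_simp]
    exact Complex.exp_int_mul_two_pi_mul_I _
  rw [sum_congr rfl fun j hj => by rw [fourierCoeff2pi_comp_add hper, hrot j hj, one_mul]]
  simp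

lemma cos_lt_one_of_pos_of_lt_two_pi {x : ℝ} (h0 : 0 < x) (h2π : x < 2 * π) : cos x < 1 :=
  (cos_le_one x).lt_of_ne fun h => h0.ne' ((cos_eq_one_iff_of_lt_of_lt (by linarith) h2π).mp h)

theorem euclidean_melnikov_not_constant_general (ρ₀ : ℝ) (hρ : 0 < ρ₀)
    (n : ℕ) (m : ℤ) (hm : 0 < m) (hmn : m < (n : ℤ))
    (ρ₁ : ℝ → ℝ) (hc : Continuous ρ₁) (hper : Function.Periodic ρ₁ (2 * π))
    (M : ℝ → ℝ)
    (hM : ∀ θ : ℝ, M θ =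
      deriv (fun ε : ℝ => ∑ j ∈ Finset.range n,
        Real.sqrt ((ρ₀ + ε * ρ₁ (θ + 2 * π * m * j / n)) ^ 2 +
          (ρ₀ + ε * ρ₁ (θ + 2 * π * m * (j + 1) / n)) ^ 2 -
          2 * (ρ₀ + ε * ρ₁ (θ + 2 * π * m * j / n)) *
            (ρ₀ + ε * ρ₁ (θ + 2 * π * m * (j + 1) / n)) * cos (2 * π * m / n))) 0)
    (h : ∃ k : ℤ, k ≠ 0 ∧ (n : ℤ) ∣ k ∧
      fourierCoeff2pi (fun θ => ((ρ₁ θ : ℝ) : ℂ)) k ≠ 0) :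
    ¬ ∃ c : ℝ, ∀ θ : ℝ, M θ = c := by
  obtain ⟨k, hk0, hnk, hρ₁k⟩ := h
  have hmR : (0 : ℝ) < m := by exact_mod_cast hm
  have hnR : (0 : ℝ) < n := hmR.trans (by exact_mod_cast hmn)
  have hcos : cos (2 * π * m / n) < 1 := by
    refine cos_lt_one_of_pos_of_lt_two_pi (by positivity) ?_
    rw [div_lt_iff₀ hnR]
    nlinarith [pi_pos, (by exact_mod_cast hmn : (m : ℝ) < n)]
  set C := 2 * √((1 - cos (2 * π * m / n)) / 2)
  have hC : 0 < C := mul_pos two_pos (Real.sqrt_pos.mpr (by linarith))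
  have hMS : ∀ θ, M θ = C * ∑ j ∈ range n, ρ₁ (θ + 2 * π * m * j / n) := fun θ => by
    have hclosed : ρ₁ (θ + 2 * π * m * n / n) = ρ₁ (θ + 2 * π * m * (0 : ℕ) / n) := by
      rw [mul_div_cancel_right₀ _ hnR.ne']
      simpa [mul_comm] using hper.int_mul m θ
    rw [hM θ]
    simpa only [Nat.cast_add, Nat.cast_one] using (hasDerivAt_closed_polygon_length ρ₀ _ hρ hcos
      (fun j : ℕ => ρ₁ (θ + 2 * π * m * j / n)) n hclosed).deriv
  rintro ⟨c, hMc⟩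
  have hS : ∀ θ, ∑ j ∈ range n, ρ₁ (θ + 2 * π * m * j / n) = c / C := fun θ => by
    rw [eq_div_iff hC.ne', mul_comm, ← hMS, hMc]
  have hrot := fourierCoeff2pi_sum_rotations (Complex.continuous_ofReal.comp hc)
    (fun θ => congrArg Complex.ofReal (hper θ)) m hnk
  simp only [Function.comp_apply, ← Complex.ofReal_sum, hS, fourierCoeff2pi_const hk0] at hrot
  exact hρ₁k ((mul_eq_zero.mp hrot.symm).resolve_left (by exact_mod_cast hnR.ne'))

/-- **Planar break-up criterion (Ramírez-Ros).** For `ρ₀ > 0`, integers `0 < m < n`,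
`n ≥ 2`, `gcd(m,n) = 1`, and a continuous `2π`-periodic `ρ₁ : ℝ → ℝ`, let `M(θ)` be the
derivative at `ε = 0` of the total length of the `(m,n)`-polygon inscribed in the perturbed
circle `ρ₀ + ερ₁` with impact angles `θ_j = θ + 2πmj/n`. If `ρ₁` has a nonzero Fourier
coefficient at some nonzero frequency `k` divisible by `n`, then `M` is not constant. -/
theorem euclidean_melnikov_not_constant (ρ₀ : ℝ) (hρ : 0 < ρ₀)
    (n : ℕ) (hn : 2 ≤ n) (m : ℤ) (hm : 0 < m) (hmn : m < (n : ℤ))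
    (hgcd : Int.gcd m (n : ℤ) = 1)
    (ρ₁ : ℝ → ℝ) (hc : Continuous ρ₁) (hper : Function.Periodic ρ₁ (2 * π))
    (M : ℝ → ℝ)
    (hM : ∀ θ : ℝ, M θ =
      deriv (fun ε : ℝ => ∑ j ∈ Finset.range n,
        Real.sqrt ((ρ₀ + ε * ρ₁ (θ + 2 * π * m * j / n)) ^ 2 +
          (ρ₀ + ε * ρ₁ (θ + 2 * π * m * (j + 1) / n)) ^ 2 -
          2 * (ρ₀ + ε * ρ₁ (θ + 2 * π * m * j / n)) *
            (ρ₀ + ε * ρ₁ (θ + 2 * π * m * (j + 1) / n)) * cos (2 * π * m / n))) 0)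
    (h : ∃ k : ℤ, k ≠ 0 ∧ (n : ℤ) ∣ k ∧
      fourierCoeff2pi (fun θ => ((ρ₁ θ : ℝ) : ℂ)) k ≠ 0) :
    ¬ ∃ c : ℝ, ∀ θ : ℝ, M θ = c :=
  euclidean_melnikov_not_constant_general ρ₀ hρ n m hm hmn ρ₁ hc hper M hM h
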